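/- Theorem 4.2(iii), two-sided truncation: let −∞ < a < b < ∞ and assume Ξ̂₁(0, b) − Ξ̂₁(0, a) > 0. Then as θ → ∞, θ e^{-θ b} M̃_{1,(a,b)}(θ) → f̂₀(b) / (Ξ̂₁(0, b) − Ξ̂₁(0, a)); that is, M̃_{1,(a,b)}(θ) ∼ θ^{-1} e^{θ b} f̂₀(b) / (Ξ̂₁(0, b) − Ξ̂₁(0, a)), where f̂₀(b) = (2π K₀''(t_b))^{-1/2} exp(K₀(t_b) − t_b b) is the saddlepoint density approximation at b. -/

import Mathlib

open MeasureTheory Set Filter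

/-- The filter on ℝ describing approach to the (possibly infinite) left endpoint
`-α` of the convergence strip from the right: `s ↓ -α`. -/
noncomputable def towardsLowerEndpoint (α : EReal) : Filter ℝ :=
  Filter.comap (fun s : ℝ => (s : EReal)) (nhdsWithin (-α) (Set.Ioi (-α)))

/-- The filter on ℝ describing approach to the (possibly infinite) right endpoint
`β` of the convergence strip from the left: `s ↑ β`. -/
noncomputable def towardsUpperEndpoint (β : EReal) : Filter ℝ :=
  Filter.comap (fun s : ℝ => (s : EReal)) (nhdsWithin β (Set.Iio β))

/-- The saddlepoint approximation (equation (26)) to the exponential convolution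
integral: `Ξ̂₁(θ, y) = [2π(1 + (θ − s)² K₀''(s))]^{-1/2} exp(K₀(s) − (s − θ)y)`,
evaluated at the saddlepoint `s = s_{1,θ}`. -/
noncomputable def XiHat (K₀ : ℝ → ℝ) (θ y s : ℝ) : ℝ :=
  (Real.sqrt (2 * Real.pi * (1 + (θ - s) ^ 2 * deriv (deriv K₀) s)))⁻¹ *
    Real.exp (K₀ s - (s - θ) * y)

/-- The saddlepoint density approximation
`f̂₀(y) = (2π K₀''(t_y))^{-1/2} exp(K₀(t_y) − t_y y)`. -/
noncomputable def fhatSP (K₀ : ℝ → ℝ) (y t : ℝ) : ℝ :=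
  (Real.sqrt (2 * Real.pi * deriv (deriv K₀) t))⁻¹ * Real.exp (K₀ t - t * y)

/-!
The saddlepoint `s_θ = s_{1,θ}(y)` solves `K₀'(s_θ) = y - 1/(θ - s_θ)`, so it lies below `t_y`,
and as `θ → ∞` the correction `1/(θ - s_θ)` vanishes and `s_θ → t_y`. Multiplying `Ξ̂₁(θ, y)` by
`θ e^{-θy}` turns it into `[2π(θ⁻² + (1 - s_θ/θ)² K₀''(s_θ))]^{-1/2} exp(K₀(s_θ) - s_θ y)`, which
therefore tends to `f̂₀(y)`. In the two-sided approximation the `a`-term carries the extra factor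
`e^{-θ(b-a)} → 0`, so only the `b`-term survives.
-/

section Saddlepoint

variable {f : ℝ → ℝ} {S : Set ℝ} {t y : ℝ}

lemma lt_of_add_inv_sub_eq (hf : StrictMonoOn f S) (ht : t ∈ S) (hty : f t = y)
    {θ u : ℝ} (hu : u ∈ S) (huθ : u < θ) (heq : f u + (θ - u)⁻¹ = y) : u < t := by
  by_contra! htu
  have hfle : f t ≤ f u := hf.monotoneOn ht hu htu
  have hpos : 0 < (θ - u)⁻¹ := inv_pos.mpr (sub_pos.mpr huθ)
  linarith

lemma tendsto_of_add_inv_sub_eq (hf : StrictMonoOn f S) (hS : S ∈ nhds t) (hty : f t = y)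
    {s : ℝ → ℝ}
    (hs : ∀ᶠ θ in atTop, s θ ∈ S ∧ s θ < θ ∧ f (s θ) + (θ - s θ)⁻¹ = y) :
    Tendsto s atTop (nhds t) := by
  have ht : t ∈ S := mem_of_mem_nhds hS
  refine tendsto_order.2 ⟨fun c hc => ?_, fun c hc => ?_⟩
  · obtain ⟨l, ⟨hcl, hlt⟩, hlS⟩ := exists_Ioc_subset_of_mem_nhds' hS hc
    obtain ⟨d, hcd, hdt, hdS⟩ : ∃ d, c < d ∧ d < t ∧ d ∈ S :=
      ⟨(l + t) / 2, by linarith, by linarith, hlS ⟨by linarith, by linarith⟩⟩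
    have hfd : f d < y := hty ▸ hf hdS ht hdt
    -- beyond this threshold, `s θ ≤ d` would give `f (s θ) + (θ - s θ)⁻¹ ≤ f d + (θ - d)⁻¹ < y`
    filter_upwards [hs, eventually_gt_atTop (d + (y - f d)⁻¹)] with θ ⟨hsS, hsθ, heq⟩ hθ
    have hθd : (θ - d)⁻¹ < y - f d := inv_lt_of_inv_lt₀ (sub_pos.mpr hfd) (by linarith)
    by_contra! hsc
    have hsd : s θ ≤ d := by linarith
    have hfs : f (s θ) ≤ f d := hf.monotoneOn hsS hdS hsd
    have hinv : (θ - s θ)⁻¹ ≤ (θ - d)⁻¹ :=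
      inv_anti₀ (by linarith [inv_pos.mpr (sub_pos.mpr hfd)]) (by linarith)
    linarith
  · filter_upwards [hs] with θ ⟨hsS, hsθ, heq⟩
    exact (lt_of_add_inv_sub_eq hf ht hty hsS hsθ heq).trans hc

end Saddlepoint

lemma mul_exp_mul_XiHat_eq (K₀ : ℝ → ℝ) {θ : ℝ} (hθ : 0 < θ) (y u : ℝ)
    (hu : 0 ≤ deriv (deriv K₀) u) :
    θ * Real.exp (-θ * y) * XiHat K₀ θ y u =
      (Real.sqrt (2 * Real.pi * (θ⁻¹ ^ 2 + (1 - u / θ) ^ 2 * deriv (deriv K₀) u)))⁻¹ *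
        Real.exp (K₀ u - u * y) := by
  have hnum : 0 ≤ 2 * Real.pi * (1 + (θ - u) ^ 2 * deriv (deriv K₀) u) := by positivity
  have harg : 2 * Real.pi * (θ⁻¹ ^ 2 + (1 - u / θ) ^ 2 * deriv (deriv K₀) u) =
      2 * Real.pi * (1 + (θ - u) ^ 2 * deriv (deriv K₀) u) / θ ^ 2 := by
    field_simp
  have hexp : Real.exp (K₀ u - u * y) = Real.exp (-θ * y) * Real.exp (K₀ u - (u - θ) * y) := by
    rw [← Real.exp_add]; ring_nf
  rw [harg, Real.sqrt_div hnum, Real.sqrt_sq hθ.le, inv_div, hexp, XiHat]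
  ring

lemma tendsto_mul_exp_mul_XiHat {K₀ : ℝ → ℝ} {S : Set ℝ} (hSo : IsOpen S) (hSc : Convex ℝ S)
    (hK₀ : ContDiffOn ℝ 2 K₀ S) (hconv : ∀ s ∈ S, 0 < deriv (deriv K₀) s)
    {y t : ℝ} (ht : t ∈ S) (hty : deriv K₀ t = y) {s : ℝ → ℝ}
    (hs : ∀ᶠ θ in atTop, s θ ∈ S ∧ s θ < θ ∧ deriv K₀ (s θ) + (θ - s θ)⁻¹ = y) :
    Tendsto (fun θ => θ * Real.exp (-θ * y) * XiHat K₀ θ y (s θ)) atTop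
      (nhds (fhatSP K₀ y t)) := by
  have hK₁ : ContDiffOn ℝ 1 (deriv K₀) S := hK₀.deriv_of_isOpen hSo (by norm_num)
  have hmono : StrictMonoOn (deriv K₀) S :=
    strictMonoOn_of_deriv_pos hSc hK₁.continuousOn fun x hx =>
      hconv x (hSo.interior_eq ▸ hx)
  have hlim : Tendsto s atTop (nhds t) :=
    tendsto_of_add_inv_sub_eq hmono (hSo.mem_nhds ht) hty hs
  have hK₀t : ContinuousAt K₀ t := hK₀.continuousOn.continuousAt (hSo.mem_nhds ht)
  have hK₂t : ContinuousAt (deriv (deriv K₀)) t :=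
    (hK₁.continuousOn_deriv_of_isOpen hSo le_rfl).continuousAt (hSo.mem_nhds ht)
  have hratio : Tendsto (fun θ => s θ / θ) atTop (nhds 0) := hlim.div_atTop tendsto_id
  have hvar : Tendsto (fun θ => 2 * Real.pi *
      (θ⁻¹ ^ 2 + (1 - s θ / θ) ^ 2 * deriv (deriv K₀) (s θ))) atTop
      (nhds (2 * Real.pi * deriv (deriv K₀) t)) := by
    simpa using (tendsto_const_nhds (x := 2 * Real.pi)).mul ((tendsto_inv_atTop_zero.pow 2).add
      ((((tendsto_const_nhds (x := (1 : ℝ))).sub hratio).pow 2).mul (hK₂t.tendsto.comp hlim)))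
  have hsqrt : Real.sqrt (2 * Real.pi * deriv (deriv K₀) t) ≠ 0 :=
    (Real.sqrt_pos.mpr (by have := hconv t ht; positivity)).ne'
  have hexp : Tendsto (fun θ => Real.exp (K₀ (s θ) - s θ * y)) atTop
      (nhds (Real.exp (K₀ t - t * y))) :=
    (Real.continuous_exp.tendsto _).comp ((hK₀t.tendsto.comp hlim).sub (hlim.mul_const y))
  refine ((((Real.continuous_sqrt.tendsto _).comp hvar).inv₀ hsqrt).mul hexp).congr' ?_
  filter_upwards [hs, eventually_gt_atTop 0] with θ hsθ hθ
  exact (mul_exp_mul_XiHat_eq K₀ hθ y (s θ) (hconv _ hsθ.1).le).symm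

lemma isOpen_coe_preimage_Ioo (α β : EReal) :
    IsOpen {s : ℝ | -α < (s : EReal) ∧ (s : EReal) < β} :=
  isOpen_Ioo.preimage continuous_coe_real_ereal

lemma convex_coe_preimage_Ioo (α β : EReal) :
    Convex ℝ {s : ℝ | -α < (s : EReal) ∧ (s : EReal) < β} :=
  (ordConnected_Ioo.preimage_mono fun _ _ h => EReal.coe_le_coe_iff.2 h).convex

lemma eventually_saddlepoint_mem_strip {α β : EReal} (hα : 0 < α) {g s : ℝ → ℝ} {y : ℝ}
    (hs : ∀ θ : ℝ, -α < (θ : EReal) →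
      (-α < (s θ : EReal) ∧ (s θ : EReal) < β ∧ s θ < θ) ∧ g (s θ) + (θ - s θ)⁻¹ = y) :
    ∀ᶠ θ in atTop, s θ ∈ {s : ℝ | -α < (s : EReal) ∧ (s : EReal) < β} ∧ s θ < θ ∧
      g (s θ) + (θ - s θ)⁻¹ = y := by
  filter_upwards [eventually_ge_atTop 0] with θ hθ
  obtain ⟨⟨h₁, h₂, h₃⟩, h₄⟩ := hs θ ((EReal.neg_lt_zero.2 hα).trans_le (EReal.coe_nonneg.2 hθ))
  exact ⟨⟨h₁, h₂⟩, h₃, h₄⟩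

theorem exp_convolution_two_sided_mgf_right_tail_general
    (K₀ : ℝ → ℝ) (α β : EReal) (hα : 0 < α)
    (hsmooth : ContDiffOn ℝ 2 K₀ {s : ℝ | -α < (s : EReal) ∧ (s : EReal) < β})
    (hconv : ∀ s : ℝ, -α < (s : EReal) → (s : EReal) < β → 0 < deriv (deriv K₀) s)
    (a b : ℝ) (hab : a < b)
    (t_a t_b : ℝ) (hta₁ : -α < (t_a : EReal)) (hta₂ : (t_a : EReal) < β)
    (htb₁ : -α < (t_b : EReal)) (htb₂ : (t_b : EReal) < β)
    (hsa : deriv K₀ t_a = a) (hsb : deriv K₀ t_b = b)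
    (sA sB : ℝ → ℝ)
    (hsA : ∀ θ : ℝ, -α < (θ : EReal) →
      (-α < (sA θ : EReal) ∧ (sA θ : EReal) < β ∧ sA θ < θ) ∧
        deriv K₀ (sA θ) + (θ - sA θ)⁻¹ = a)
    (hsB : ∀ θ : ℝ, -α < (θ : EReal) →
      (-α < (sB θ : EReal) ∧ (sB θ : EReal) < β ∧ sB θ < θ) ∧
        deriv K₀ (sB θ) + (θ - sB θ)⁻¹ = b) :
    Tendsto (fun θ : ℝ => θ * Real.exp (-θ * b) *
        ((XiHat K₀ θ b (sB θ) - XiHat K₀ θ a (sA θ))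
          / (XiHat K₀ 0 b (sB 0) - XiHat K₀ 0 a (sA 0))))
      atTop (nhds (fhatSP K₀ b t_b / (XiHat K₀ 0 b (sB 0) - XiHat K₀ 0 a (sA 0)))) := by
  have hB := tendsto_mul_exp_mul_XiHat (isOpen_coe_preimage_Ioo α β)
    (convex_coe_preimage_Ioo α β) hsmooth (fun s hs => hconv s hs.1 hs.2) ⟨htb₁, htb₂⟩ hsb
    (eventually_saddlepoint_mem_strip hα hsB)
  have hA := tendsto_mul_exp_mul_XiHat (isOpen_coe_preimage_Ioo α β)
    (convex_coe_preimage_Ioo α β) hsmooth (fun s hs => hconv s hs.1 hs.2) ⟨hta₁, hta₂⟩ hsa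
    (eventually_saddlepoint_mem_strip hα hsA)
  have hdecay : Tendsto (fun θ : ℝ => Real.exp (-(θ * (b - a)))) atTop (nhds 0) :=
    Real.tendsto_exp_atBot.comp
      (tendsto_neg_atTop_atBot.comp (tendsto_id.atTop_mul_const (sub_pos.mpr hab)))
  have hlim := (hB.sub (hdecay.mul hA)).div_const (XiHat K₀ 0 b (sB 0) - XiHat K₀ 0 a (sA 0))
  rw [zero_mul, sub_zero] at hlim
  refine hlim.congr fun θ => ?_
  have hsplit : Real.exp (-θ * b) = Real.exp (-(θ * (b - a))) * Real.exp (-θ * a) := by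
    rw [← Real.exp_add]; ring_nf
  rw [hsplit]
  ring

/-- **Theorem 4.2(iii), two-sided truncation**: with `−∞ < a < b < ∞`,
`Ξ̂₁(0, b) − Ξ̂₁(0, a) > 0`, and `s_A, s_B` the exponential-convolution
saddlepoint functions for `y = a` and `y = b`, the two-sided approximation
`M̃_{1,(a,b)}(θ) = (Ξ̂₁(θ, b) − Ξ̂₁(θ, a))/(Ξ̂₁(0, b) − Ξ̂₁(0, a))` satisfies
`θ e^{-θb} M̃_{1,(a,b)}(θ) → f̂₀(b)/(Ξ̂₁(0, b) − Ξ̂₁(0, a))` as `θ → ∞`, i.e.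
`M̃_{1,(a,b)}(θ) ∼ θ⁻¹ e^{θb} f̂₀(b)/(Ξ̂₁(0, b) − Ξ̂₁(0, a))`. -/
theorem exp_convolution_two_sided_mgf_right_tail
    (K₀ : ℝ → ℝ) (α β : EReal) (hα : 0 < α) (hβ : 0 < β)
    (hsmooth : ContDiffOn ℝ 2 K₀ {s : ℝ | -α < (s : EReal) ∧ (s : EReal) < β})
    (hconv : ∀ s : ℝ, -α < (s : EReal) → (s : EReal) < β → 0 < deriv (deriv K₀) s)
    (hbot : Tendsto (deriv K₀) (towardsLowerEndpoint α) atBot)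
    (htop : Tendsto (deriv K₀) (towardsUpperEndpoint β) atTop)
    (a b : ℝ) (hab : a < b)
    (t_a t_b : ℝ) (hta₁ : -α < (t_a : EReal)) (hta₂ : (t_a : EReal) < β)
    (htb₁ : -α < (t_b : EReal)) (htb₂ : (t_b : EReal) < β)
    (hsa : deriv K₀ t_a = a) (hsb : deriv K₀ t_b = b)
    (sA sB : ℝ → ℝ)
    (hsA : ∀ θ : ℝ, -α < (θ : EReal) →
      (-α < (sA θ : EReal) ∧ (sA θ : EReal) < β ∧ sA θ < θ) ∧
        deriv K₀ (sA θ) + (θ - sA θ)⁻¹ = a)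
    (hsB : ∀ θ : ℝ, -α < (θ : EReal) →
      (-α < (sB θ : EReal) ∧ (sB θ : EReal) < β ∧ sB θ < θ) ∧
        deriv K₀ (sB θ) + (θ - sB θ)⁻¹ = b)
    (hden : 0 < XiHat K₀ 0 b (sB 0) - XiHat K₀ 0 a (sA 0)) :
    Tendsto (fun θ : ℝ => θ * Real.exp (-θ * b) *
        ((XiHat K₀ θ b (sB θ) - XiHat K₀ θ a (sA θ))
          / (XiHat K₀ 0 b (sB 0) - XiHat K₀ 0 a (sA 0))))
      atTop (nhds (fhatSP K₀ b t_b / (XiHat K₀ 0 b (sB 0) - XiHat K₀ 0 a (sA 0)))) :=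
  exp_convolution_two_sided_mgf_right_tail_general K₀ α β hα hsmooth hconv a b hab t_a t_b hta₁ hta₂
    htb₁ htb₂ hsa hsb sA sB hsA hsB
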